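/- arXiv:2112.13336 — 7 statements merged into one kernel-verified Lean document; each statement's English description precedes it below -/
import Mathlib

section
/- Let S be a compact Hausdorff space, π : S → ℝ continuous, and G an abelian group of continuous real-valued functions on S (the image of the map L). Define G⁺ = {f ∈ G : f(x) > 0 for all x ∈ S} ∪ {0}. Then G⁺ ∩ (−G⁺) = {0}, and if moreover for every n ∈ ℤ the function x ↦ e^{nπ(x)} lies in G and for every f ∈ G there is n with f + (x ↦ e^{nπ(x)}) ∈ G⁺, then G = G⁺ − G⁺ and every nonzero element of G⁺ is an order unit for (G, G⁺), i.e., for every g ∈ G⁺ \ {0} and every h ∈ G there exists n ∈ ℕ with h ≤ n·g. -/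
/-- For a compact Hausdorff space `S`, continuous `π : S → ℝ`, and a subgroup
`G` of `C(S,ℝ)` containing the functions `x ↦ e^{nπ(x)}`, with
`G⁺ = {f ∈ G : ∀ x, f x > 0} ∪ {0}`: `G⁺ ∩ (−G⁺) = {0}`, and if every `f ∈ G` admits
`n` with `f + e^{nπ} ∈ G⁺` then `G = G⁺ − G⁺` and every nonzero element of `G⁺` is an
order unit. -/
theorem stmt_0 {S : Type*} [TopologicalSpace S] [CompactSpace S] [T2Space S] [Nonempty S]
    (π : C(S, ℝ)) (G : AddSubgroup C(S, ℝ))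
    (hone : (1 : C(S, ℝ)) ∈ G)
    (E : ℤ → C(S, ℝ)) (hE : ∀ (n : ℤ) (x : S), E n x = Real.exp (n * π x))
    (hEG : ∀ n : ℤ, E n ∈ G)
    (Gpos : Set C(S, ℝ))
    (hGpos : Gpos = {f | f ∈ G ∧ ∀ x, 0 < f x} ∪ {0}) :
    Gpos ∩ (-Gpos) = {0} ∧
      ((∀ f ∈ G, ∃ n : ℤ, f + E n ∈ Gpos) →
        ((∀ f ∈ G, ∃ g ∈ Gpos, ∃ k ∈ Gpos, f = g - k) ∧
          (∀ g ∈ Gpos, g ≠ 0 → ∀ h ∈ G, ∃ n : ℕ, n • g - h ∈ Gpos))) := by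
  subst hGpos
  constructor
  · ext f
    simp only [Set.mem_inter_iff, Set.mem_union, Set.mem_setOf_eq, Set.mem_neg,
      Set.mem_singleton_iff]
    constructor
    · rintro ⟨hf, hnf⟩
      rcases hf with ⟨-, hfpos⟩ | hf0
      · rcases hnf with ⟨-, hnfpos⟩ | hnf0
        · exfalso
          obtain ⟨x⟩ := ‹Nonempty S›
          have h1 := hfpos x
          have h2 := hnfpos x
          simp only [ContinuousMap.neg_apply] at h2
          linarith
        · have : f = 0 := by
            have := congrArg Neg.neg hnf0
            simpa using this
          exact this
      · exact hf0
    · rintro rfl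
      exact ⟨Or.inr rfl, Or.inr (by simp)⟩
  · intro H
    constructor
    · intro f hf
      obtain ⟨n, hn⟩ := H f hf
      refine ⟨f + E n, hn, E n, ?_, by ring⟩
      left
      refine ⟨hEG n, fun x => ?_⟩
      rw [hE]
      exact Real.exp_pos _
    · intro g hg hg0 h hh
      rcases hg with ⟨hgG, hgpos⟩ | hzero
      · -- g is in G and pointwise positive
        obtain ⟨x0, -, hx0⟩ := isCompact_univ.exists_isMinOn (Set.univ_nonempty)
          (g.continuous.continuousOn)
        obtain ⟨x1, -, hx1⟩ := isCompact_univ.exists_isMaxOn (Set.univ_nonempty)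
          (h.continuous.continuousOn)
        set ε := g x0 with hε
        set M := h x1 with hM
        have hεpos : 0 < ε := hgpos x0
        obtain ⟨n, hn⟩ := exists_nat_gt (M / ε)
        have hMn : M < n * ε := (div_lt_iff₀ hεpos).mp hn
        refine ⟨n, Or.inl ⟨?_, fun x => ?_⟩⟩
        · exact sub_mem (nsmul_mem hgG n) hh
        · have h1 : h x ≤ M := hx1 (Set.mem_univ x)
          have h2 : ε ≤ g x := hx0 (Set.mem_univ x)
          have h3 : (n : ℝ) * ε ≤ n * g x :=
            mul_le_mul_of_nonneg_left h2 (Nat.cast_nonneg n)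
          have : ((n • g - h : C(S, ℝ))) x = n * g x - h x := by
            simp [nsmul_eq_smul]
          rw [this]
          linarith
      · exact absurd hzero hg0
end

section
/- Let S be a compact Hausdorff space, π : S → ℝ continuous, and m a regular Borel probability measure on S such that for every continuous function g : π(S) → ℝ one has ∫_S e^{−π(x)} g(π(x)) dm(x) = s·∫_S g(π(x)) dm(x), where s > 0. Then −log s ∈ π(S) and the pushforward measure m∘π⁻¹ is the point mass at β = −log s; equivalently m is concentrated on π⁻¹(β). -/
open MeasureTheory

/-- If `m` is a regular Borel probability measure on a compact Hausdorff
space `S` and `∫ e^{−π} (g∘π) dm = s ∫ (g∘π) dm` for all continuous `g : ℝ → ℝ`, with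
`s > 0`, then `β = −log s` lies in `π(S)` and `m` is concentrated on `π⁻¹(β)`. -/
theorem stmt_5 {S : Type*} [TopologicalSpace S] [CompactSpace S] [T2Space S]
    [MeasurableSpace S] [BorelSpace S]
    (π : C(S, ℝ)) (m : Measure S) [IsProbabilityMeasure m] [m.Regular]
    (s : ℝ) (hs : 0 < s)
    (hint : ∀ g : C(ℝ, ℝ),
      ∫ x, Real.exp (-(π x)) * g (π x) ∂m = s * ∫ x, g (π x) ∂m) :
    (∃ x : S, π x = -Real.log s) ∧ m (π ⁻¹' {-Real.log s}) = 1 := by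
  set β := -Real.log s with hβ
  have hg : Continuous (fun t : ℝ => Real.exp (-t) - s) := by continuity
  have key := hint ⟨fun t => Real.exp (-t) - s, hg⟩
  simp only [ContinuousMap.coe_mk] at key
  have hcont : Continuous (fun x : S => (Real.exp (-(π x)) - s) ^ 2) := by
    have := π.continuous
    continuity
  have hint2 : Integrable (fun x : S => (Real.exp (-(π x)) - s) ^ 2) m :=
    hcont.integrable_of_hasCompactSupport
      (HasCompactSupport.of_compactSpace _)
  have hsq : ∫ x, (Real.exp (-(π x)) - s) ^ 2 ∂m = 0 := by
    have e1 : ∀ x : S, (Real.exp (-(π x)) - s) ^ 2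
        = Real.exp (-(π x)) * (Real.exp (-(π x)) - s) - s * (Real.exp (-(π x)) - s) := by
      intro x; ring
    have hcont2 : Continuous (fun x : S => Real.exp (-(π x)) * (Real.exp (-(π x)) - s)) := by
      have := π.continuous; continuity
    have hcont3 : Continuous (fun x : S => s * (Real.exp (-(π x)) - s)) := by
      have := π.continuous; continuity
    have hI2 : Integrable (fun x : S => Real.exp (-(π x)) * (Real.exp (-(π x)) - s)) m :=
      hcont2.integrable_of_hasCompactSupport (HasCompactSupport.of_compactSpace _)
    have hI3 : Integrable (fun x : S => Real.exp (-(π x)) - s) m := by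
      have : Continuous (fun x : S => Real.exp (-(π x)) - s) := by
        have := π.continuous; continuity
      exact this.integrable_of_hasCompactSupport (HasCompactSupport.of_compactSpace _)
    calc ∫ x, (Real.exp (-(π x)) - s) ^ 2 ∂m
        = ∫ x, (Real.exp (-(π x)) * (Real.exp (-(π x)) - s) - s * (Real.exp (-(π x)) - s)) ∂m := by
          simp_rw [e1]
      _ = (∫ x, Real.exp (-(π x)) * (Real.exp (-(π x)) - s) ∂m)
            - ∫ x, s * (Real.exp (-(π x)) - s) ∂m := integral_sub hI2 (hI3.const_mul s)
      _ = 0 := by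
          rw [integral_const_mul, key]; ring
  have hae : ∀ᵐ x ∂m, (Real.exp (-(π x)) - s) ^ 2 = 0 := by
    have hnn : 0 ≤ᵐ[m] fun x : S => (Real.exp (-(π x)) - s) ^ 2 :=
      Filter.Eventually.of_forall fun x => sq_nonneg _
    have := (integral_eq_zero_iff_of_nonneg_ae hnn hint2).mp hsq
    filter_upwards [this] with x hx using hx
  have haeβ : ∀ᵐ x ∂m, π x = β := by
    filter_upwards [hae] with x hx
    have h1 : Real.exp (-(π x)) = s := by
      have := pow_eq_zero_iff (n := 2) (by norm_num) |>.mp hx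
      linarith
    have : -(π x) = Real.log s := by
      rw [← h1, Real.log_exp]
    rw [hβ]; linarith
  have hm1 : m (π ⁻¹' {β}) = 1 := by
    have : m {x | ¬ π x = β} = 0 := haeβ
    have hc : (π ⁻¹' {β})ᶜ = {x | ¬ π x = β} := by
      ext x; simp
    exact (prob_compl_eq_zero_iff
      (π.continuous.measurable (measurableSet_singleton β))).mp (by rw [hc]; exact haeβ)
  refine ⟨?_, hm1⟩
  have hne : (π ⁻¹' {β}).Nonempty := by
    by_contra h
    rw [Set.not_nonempty_iff_eq_empty] at h
    rw [h] at hm1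
    simp at hm1
  obtain ⟨x, hx⟩ := hne
  exact ⟨x, hx⟩
end

section
/- Let H be an abelian group and (G, G⁺) an ordered abelian group with G⁺ ∩ (−G⁺) = {0}. Set G♯ = H ⊕ G with positive cone G♯⁺ = {(h, g) : g ∈ G⁺ \ {0}} ∪ {0}, and let v = (w, 1) for some w ∈ H where 1 ∈ G⁺ \ {0}. If φ : G♯ → ℝ is a positive homomorphism with φ(v) = 1, then φ(h, 0) = 0 for all h ∈ H; consequently φ factors through the projection p : G♯ → G, i.e., there is a positive homomorphism ψ : G → ℝ with ψ(g) = φ(h, g) for any h. -/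
/-! Since `(h, 1)` is positive for every `h`, `φ(n • h, 0) + φ(0, 1) ≥ 0` for every integer `n`;
by the Archimedean property of `ℝ` this forces `φ(h, 0) = 0`, so `φ` only sees the
`G`-coordinate and `ψ` is its restriction to `0 × G`. -/

section Archimedean

variable {α : Type*} [AddCommGroup α] [LinearOrder α] [IsOrderedAddMonoid α] [Archimedean α]

theorem nonpos_of_forall_nsmul_le {a b : α} (h : ∀ n : ℕ, n • a ≤ b) : a ≤ 0 := by
  by_contra! ha
  obtain ⟨n, hn⟩ := Archimedean.arch (b + a) ha
  exact (lt_add_of_pos_right b ha).not_ge (hn.trans (h n))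

theorem eq_zero_of_forall_zsmul_add_nonneg {a c : α} (h : ∀ n : ℤ, 0 ≤ n • a + c) : a = 0 := by
  have hle : a ≤ 0 := nonpos_of_forall_nsmul_le (b := c) fun n => by
    simpa only [neg_smul, natCast_zsmul, neg_add_eq_sub, sub_nonneg] using h (-n)
  have hge : -a ≤ 0 := nonpos_of_forall_nsmul_le (b := c) fun n => by
    simpa only [smul_neg, neg_le_iff_add_nonneg', natCast_zsmul] using h n
  exact le_antisymm hle (neg_nonpos.mp hge)

end Archimedean

theorem AddMonoidHom.map_inl_eq_zero_of_forall_nonneg {H G α : Type*} [AddCommGroup H]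
    [AddCommGroup G] [AddCommGroup α] [LinearOrder α] [IsOrderedAddMonoid α] [Archimedean α]
    (φ : H × G →+ α) {g : G} (hg : ∀ x : H, 0 ≤ φ (x, g)) (x : H) : φ (x, 0) = 0 := by
  refine eq_zero_of_forall_zsmul_add_nonneg (c := φ (0, g)) fun n => ?_
  have hsplit : ((n • x, g) : H × G) = n • (x, 0) + (0, g) := by simp
  simpa only [hsplit, map_add, map_zsmul] using hg (n • x)

theorem stmt_9_general {H G : Type*} [AddCommGroup H] [AddCommGroup G]
    (Gpos : Set G)
    (one : G) (hone : one ∈ Gpos) (hone0 : one ≠ 0)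
    (cone : Set (H × G))
    (hcone : cone = {p | p.2 ∈ Gpos ∧ p.2 ≠ 0} ∪ {0})
    (φ : H × G →+ ℝ)
    (hpos : ∀ p ∈ cone, 0 ≤ φ p) :
    (∀ h : H, φ (h, 0) = 0) ∧
      ∃ ψ : G →+ ℝ, (∀ g ∈ Gpos, 0 ≤ ψ g) ∧ ∀ (h : H) (g : G), ψ g = φ (h, g) := by
  subst hcone
  have hpos_of_ne_zero : ∀ (h : H) {g : G}, g ∈ Gpos → g ≠ 0 → 0 ≤ φ (h, g) :=
    fun h g hg hg0 => hpos _ (Or.inl ⟨hg, hg0⟩)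
  have hker : ∀ h : H, φ (h, 0) = 0 :=
    φ.map_inl_eq_zero_of_forall_nonneg fun h => hpos_of_ne_zero h hone hone0
  refine ⟨hker, φ.comp (AddMonoidHom.inr H G), fun g hg => ?_, fun h g => ?_⟩
  · rcases eq_or_ne g 0 with rfl | hg0
    · exact (map_zero _).ge
    · exact hpos_of_ne_zero 0 hg hg0
  · have hsplit : ((h, g) : H × G) = (h, 0) + (0, g) := by simp
    rw [hsplit, map_add, hker, zero_add]
    rfl

/-- With `G♯ = H ⊕ G`, cone `{(h,g) : g ∈ G⁺ \ {0}} ∪ {0}` and order unit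
`v = (w, 1)`, any positive homomorphism `φ : G♯ → ℝ` with `φ(v) = 1` vanishes on
`H ⊕ 0` and factors through the projection to `G` as a positive homomorphism `ψ`. -/
theorem stmt_9 {H G : Type*} [AddCommGroup H] [AddCommGroup G]
    (Gpos : Set G) (hGpos : Gpos ∩ (-Gpos) = {0})
    (one : G) (hone : one ∈ Gpos) (hone0 : one ≠ 0)
    (cone : Set (H × G))
    (hcone : cone = {p | p.2 ∈ Gpos ∧ p.2 ≠ 0} ∪ {0})
    (w : H) (φ : H × G →+ ℝ)
    (hpos : ∀ p ∈ cone, 0 ≤ φ p)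
    (hφv : φ (w, one) = 1) :
    (∀ h : H, φ (h, 0) = 0) ∧
      ∃ ψ : G →+ ℝ, (∀ g ∈ Gpos, 0 ≤ ψ g) ∧ ∀ (h : H) (g : G), ψ g = φ (h, g) :=
  stmt_9_general Gpos one hone hone0 cone hcone φ hpos
end

section
/- Let H be a nonzero abelian group and (G, G⁺) an ordered abelian group of continuous functions on a locally compact space, as in the text, with the property that for every nonzero order ideal J of G with α(J) = J (where α(g) = e^{−π}·g) one has J = G. Set G♯ = H ⊕ G with cone G♯⁺ = {(h,g) : g ∈ G⁺ \ {0}} ∪ {0} and α♯ = κ ⊕ α for an automorphism κ of H. If I is an order ideal of G♯ with α♯(I) = I, I ≠ {0}, and p(I) = G (where p is the projection to G), then H ⊕ 0 ⊆ I, hence I = G♯. -/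
/-- `G♯ = H ⊕ G` with cone `{(h,g) : g ∈ G⁺ \ {0}} ∪ {0}` and
`α♯ = κ ⊕ α`. If `I` is an order ideal of `G♯` with `α♯(I) = I`, `I ≠ {0}` and
`p(I) = G`, then `H ⊕ 0 ⊆ I` and hence `I = G♯`. -/
theorem stmt_10 {H G : Type*} [AddCommGroup H] [AddCommGroup G] [Nontrivial H]
    (Gpos : Set G) (h0 : (0 : G) ∈ Gpos)
    (one : G) (hone : one ∈ Gpos) (hone0 : one ≠ 0)
    (cone : Set (H × G))
    (hcone : cone = {p | p.2 ∈ Gpos ∧ p.2 ≠ 0} ∪ {0})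
    (κ : H ≃+ H) (α : G ≃+ G)
    (I : AddSubgroup (H × G))
    (hIdecomp : ∀ p ∈ I, ∃ a ∈ I, ∃ b ∈ I, a ∈ cone ∧ b ∈ cone ∧ p = a - b)
    (hIhered : ∀ p q : H × G, p ∈ I → q ∈ cone → p - q ∈ cone → q ∈ I)
    (hIinv : ∀ p : H × G, p ∈ I ↔ (κ p.1, α p.2) ∈ I)
    (hIne : I ≠ ⊥)
    (hsurj : ∀ g : G, ∃ h : H, (h, g) ∈ I) :
    (∀ h : H, (h, (0 : G)) ∈ I) ∧ I = ⊤ := by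
  obtain ⟨h', hh'⟩ := hsurj one
  have key : ∀ h : H, (h, (0 : G)) ∈ I := by
    intro h
    have hp : (((h', one) + (h', one)) : H × G) ∈ I := I.add_mem hh' hh'
    have hq : ((h + h', one) : H × G) ∈ I := by
      apply hIhered _ _ hp
      · rw [hcone]; left; exact ⟨hone, hone0⟩
      · rw [hcone]; left
        refine ⟨?_, ?_⟩ <;> simp [Prod.sub_def, hone, hone0]
    have := I.sub_mem hq hh'
    simpa using this
  refine ⟨key, ?_⟩
  ext p
  simp only [AddSubgroup.mem_top, iff_true]
  obtain ⟨h'', hh''⟩ := hsurj p.2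
  have := I.add_mem (key (p.1 - h'')) hh''
  simpa using this
end

section
/- Let G = (⊕_ℤ ℤ) ⊕ G₀ with order G⁺ = {(ξ,g) : L(ξ,g)(x) > 0 ∀x ∈ S} ∪ {0}, where π⁻¹(0) = {ō} and g(ō) = 0 for g ∈ G₀. With Σ₀((zₙ), f) = Σₙ zₙ and α the automorphism (ξ,g) ↦ (σ(ξ), e^{−π}g): Σ₀ vanishes on (id − α)(G), and the induced map Σ : G/(id−α)(G) → ℤ sends the class of the positive cone into ℕ ∪ {0} and is surjective onto ℕ ∪ {0} on positive classes; i.e., Σ₀(G⁺) ⊆ ℕ and for every n ∈ ℕ there is an element of G⁺ with Σ₀-value n. -/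
namespace Finsupp

variable {ι M : Type*}

theorem sum_support_sub [DecidableEq ι] [AddCommGroup M] (ξ η : ι →₀ M) :
    ∑ n ∈ (ξ - η).support, (ξ - η) n = ∑ n ∈ ξ.support, ξ n - ∑ n ∈ η.support, η n :=
  sum_sub_index (h := fun _ m => m) fun _ _ _ => rfl

theorem sum_support_of_shift [AddGroup ι] [AddCommMonoid M] (ξ η : ι →₀ M) (k : ι)
    (h : ∀ n, η n = ξ (n + k)) :
    ∑ n ∈ η.support, η n = ∑ n ∈ ξ.support, ξ n := by
  have hη : η = equivMapDomain (Equiv.addRight k).symm ξ := by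
    ext n
    simp [h n]
  rw [hη]
  exact sum_equivMapDomain _ _ fun _ m => m

theorem sum_support_single [AddCommMonoid M] (a : ι) (b : M) :
    ∑ n ∈ (single a b).support, single a b n = b :=
  sum_single_index (h := fun _ m => m) rfl

end Finsupp

theorem stmt_14_general {S : Type*} [TopologicalSpace S]
    (π : C(S, ℝ)) (o₀ : S) (hπo : π o₀ = 0)
    (G₀ : AddSubgroup C(S, ℝ)) (hvan : ∀ g ∈ G₀, g o₀ = 0)
    (L : (ℤ →₀ ℤ) → C(S, ℝ) → S → ℝ)
    (hL : ∀ ξ g x, L ξ g x = g x + ∑ n ∈ ξ.support, (ξ n : ℝ) * Real.exp (n * π x)) :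
    (∀ ξ η : ℤ →₀ ℤ, (∀ n : ℤ, η n = ξ (n + 1)) →
        (∑ n ∈ (ξ - η).support, (ξ - η) n) = 0) ∧
    (∀ (ξ : ℤ →₀ ℤ) (g : C(S, ℝ)), g ∈ G₀ → (∀ x, 0 < L ξ g x) →
        0 ≤ ∑ n ∈ ξ.support, ξ n) ∧
    (∀ N : ℕ, ∃ (ξ : ℤ →₀ ℤ) (g : C(S, ℝ)), g ∈ G₀ ∧
        ((ξ = 0 ∧ g = 0) ∨ ∀ x, 0 < L ξ g x) ∧
        (∑ n ∈ ξ.support, ξ n) = (N : ℤ)) := by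
  have L_at_o₀ : ∀ ξ, ∀ g ∈ G₀, L ξ g o₀ = ((∑ n ∈ ξ.support, ξ n : ℤ) : ℝ) := by
    intro ξ g hg
    simp [hL, hvan g hg, hπo]
  refine ⟨fun ξ η h => ?_, fun ξ g hg hpos => ?_, fun N => ?_⟩
  · rw [Finsupp.sum_support_sub, Finsupp.sum_support_of_shift ξ η 1 h, sub_self]
  · exact_mod_cast L_at_o₀ ξ g hg ▸ (hpos o₀).le
  · refine ⟨Finsupp.single 0 N, 0, G₀.zero_mem, ?_, Finsupp.sum_support_single 0 _⟩
    rcases N.eq_zero_or_pos with rfl | hN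
    · exact Or.inl ⟨Finsupp.single_zero 0, rfl⟩
    · refine Or.inr fun x => ?_
      rw [hL, Finsupp.support_single _ (by positivity)]
      simpa using hN

/-- With `Σ₀((zₙ),f) = Σₙ zₙ`, `α(ξ,g) = (σ(ξ), e^{−π}g)` and
`G⁺ = {(ξ,g) : L(ξ,g) > 0 pointwise} ∪ {0}`: `Σ₀` vanishes on `(id − α)(G)`,
`Σ₀(G⁺) ⊆ ℕ ∪ {0}`, and every `N ∈ ℕ` is the `Σ₀`-value of an element of `G⁺`. -/
theorem stmt_14 {S : Type*} [TopologicalSpace S] [CompactSpace S] [T2Space S]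
    (π : C(S, ℝ)) (o₀ : S) (hπo : π o₀ = 0) (hπ : ∀ x, π x = 0 → x = o₀)
    (G₀ : AddSubgroup C(S, ℝ)) (hvan : ∀ g ∈ G₀, g o₀ = 0)
    (L : (ℤ →₀ ℤ) → C(S, ℝ) → S → ℝ)
    (hL : ∀ ξ g x, L ξ g x = g x + ∑ n ∈ ξ.support, (ξ n : ℝ) * Real.exp (n * π x)) :
    (∀ ξ η : ℤ →₀ ℤ, (∀ n : ℤ, η n = ξ (n + 1)) →
        (∑ n ∈ (ξ - η).support, (ξ - η) n) = 0) ∧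
    (∀ (ξ : ℤ →₀ ℤ) (g : C(S, ℝ)), g ∈ G₀ → (∀ x, 0 < L ξ g x) →
        0 ≤ ∑ n ∈ ξ.support, ξ n) ∧
    (∀ N : ℕ, ∃ (ξ : ℤ →₀ ℤ) (g : C(S, ℝ)), g ∈ G₀ ∧
        ((ξ = 0 ∧ g = 0) ∨ ∀ x, 0 < L ξ g x) ∧
        (∑ n ∈ ξ.support, ξ n) = (N : ℤ)) :=
  stmt_14_general π o₀ hπo G₀ hvan L hL
end

section
/- Let A and Z be unital C*-algebras, τ the unique tracial state on A, θ a flow on Z, and θ'_t = id_A ⊗ θ_t the induced flow on A ⊗ Z (minimal tensor product). If ω' is a state on A ⊗ Z such that ω'((a₁⊗1)(a₂⊗b)) = ω'((a₂⊗b)(a₁⊗1)) for all a₁,a₂ ∈ A, b ∈ Z (which holds when ω' is a KMS state for θ' since a⊗1 is θ'-fixed), then ω'(a ⊗ b) = τ(a)·ω(b) for all a ∈ A, b ∈ Z, where ω(b) := ω'(1 ⊗ b) defines a state on Z. -/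
/-!
For `c : Z`, the slice `a ↦ ω'(a ⊗ c⋆c)` is a positive tracial functional on `A`, so by uniqueness
of the tracial state it is `ω'(1 ⊗ c⋆c) • τ`. Every element of `Z` is a complex linear combination
of elements `c⋆c` (split into real and imaginary parts, and write a self-adjoint `x` as
`((x + 1)⋆(x + 1) - x⋆x - 1) / 2`), so the factorization extends to all of `Z` by linearity.
-/

open TensorProduct ComplexOrder ComplexStarModule

theorem Complex.nonneg_iff_re_nonneg_and_im_eq_zero {z : ℂ} : 0 ≤ z ↔ 0 ≤ z.re ∧ z.im = 0 := by
  rw [Complex.nonneg_iff, eq_comm (a := (0 : ℝ)) (b := z.im)]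

/-- Adding `τ` before normalizing keeps the normalization away from `σ 1 = 0`. -/
theorem LinearMap.eq_apply_one_smul_of_unique_tracial_state {A : Type*} [Semiring A] [StarRing A]
    [Module ℂ A] (τ : A →ₗ[ℂ] ℂ) (hτ1 : τ 1 = 1) (hτpos : ∀ a, 0 ≤ τ (star a * a))
    (hτtrace : ∀ a b, τ (a * b) = τ (b * a))
    (hτunique : ∀ ρ : A →ₗ[ℂ] ℂ, ρ 1 = 1 → (∀ a, 0 ≤ ρ (star a * a)) →
      (∀ a b, ρ (a * b) = ρ (b * a)) → ρ = τ)
    (σ : A →ₗ[ℂ] ℂ) (hσpos : ∀ a, 0 ≤ σ (star a * a)) (hσtrace : ∀ a b, σ (a * b) = σ (b * a)) :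
    σ = σ 1 • τ := by
  have hσ1 : 0 ≤ σ 1 := by simpa using hσpos 1
  have hnorm : 0 < 1 + σ 1 := add_pos_of_pos_of_nonneg one_pos hσ1
  have hρ : (1 + σ 1)⁻¹ • (τ + σ) = τ := by
    refine hτunique _ ?_ (fun a => ?_) (fun a b => ?_) <;>
      simp only [LinearMap.smul_apply, LinearMap.add_apply, smul_eq_mul]
    · rw [hτ1, inv_mul_cancel₀ hnorm.ne']
    · exact mul_nonneg (inv_nonneg.2 hnorm.le) (add_nonneg (hτpos a) (hσpos a))
    · rw [hτtrace a b, hσtrace a b]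
  ext a
  have := LinearMap.congr_fun hρ a
  simp only [LinearMap.smul_apply, LinearMap.add_apply, smul_eq_mul] at this ⊢
  field_simp [hnorm.ne'] at this
  linear_combination this

theorem IsSelfAdjoint.add_self_eq {Z : Type*} [Ring Z] [StarRing Z] {x : Z} (hx : IsSelfAdjoint x) :
    x + x = star (x + 1) * (x + 1) - star x * x - star 1 * 1 := by
  simp only [star_add, star_one, hx.star_eq]
  noncomm_ring

theorem LinearMap.ext_star_mul_self {Z M : Type*} [Ring Z] [StarRing Z] [Algebra ℂ Z]
    [StarModule ℂ Z] [AddCommGroup M] [Module ℂ M] {f g : Z →ₗ[ℂ] M}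
    (h : ∀ c, f (star c * c) = g (star c * c)) : f = g := by
  have hsa : ∀ x : Z, IsSelfAdjoint x → f x = g x := by
    intro x hx
    have h2 : f (x + x) = g (x + x) := by simp only [hx.add_self_eq, map_sub, h]
    simpa [← two_smul ℂ, smul_right_inj (two_ne_zero' ℂ)] using h2
  ext b
  rw [← realPart_add_I_smul_imaginaryPart b, map_add, map_add, map_smul, map_smul,
    hsa _ (ℜ b).2, hsa _ (ℑ b).2]

theorem stmt_15_general {A Z : Type*}
    [NormedRing A] [StarRing A] [NormedAlgebra ℂ A]
    [NormedRing Z] [StarRing Z] [NormedAlgebra ℂ Z] [StarModule ℂ Z]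
    (τ : A →ₗ[ℂ] ℂ) (hτ1 : τ 1 = 1)
    (hτpos : ∀ a : A, 0 ≤ (τ (star a * a)).re ∧ (τ (star a * a)).im = 0)
    (hτtrace : ∀ a b : A, τ (a * b) = τ (b * a))
    (hτunique : ∀ ρ : A →ₗ[ℂ] ℂ, ρ 1 = 1 →
      (∀ a : A, 0 ≤ (ρ (star a * a)).re ∧ (ρ (star a * a)).im = 0) →
      (∀ a b : A, ρ (a * b) = ρ (b * a)) → ρ = τ)
    (ω' : A ⊗[ℂ] Z →ₗ[ℂ] ℂ) (hω'1 : ω' 1 = 1)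
    (hω'pos : ∀ (a : A) (b : Z),
      0 ≤ (ω' ((star a * a) ⊗ₜ[ℂ] (star b * b))).re ∧
        (ω' ((star a * a) ⊗ₜ[ℂ] (star b * b))).im = 0)
    (hcomm : ∀ (a₁ a₂ : A) (b : Z),
      ω' ((a₁ ⊗ₜ[ℂ] (1 : Z)) * (a₂ ⊗ₜ[ℂ] b)) =
        ω' ((a₂ ⊗ₜ[ℂ] b) * (a₁ ⊗ₜ[ℂ] (1 : Z)))) :
    (∀ (a : A) (b : Z), ω' (a ⊗ₜ[ℂ] b) = τ a * ω' ((1 : A) ⊗ₜ[ℂ] b)) ∧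
      ω' ((1 : A) ⊗ₜ[ℂ] (1 : Z)) = 1 ∧
      (∀ b : Z, 0 ≤ (ω' ((1 : A) ⊗ₜ[ℂ] (star b * b))).re ∧
        (ω' ((1 : A) ⊗ₜ[ℂ] (star b * b))).im = 0) := by
  simp only [← Complex.nonneg_iff_re_nonneg_and_im_eq_zero] at hτpos hτunique hω'pos ⊢
  have hslice : ∀ c : Z, ω'.comp ((TensorProduct.mk ℂ A Z).flip (star c * c)) =
      ω' ((1 : A) ⊗ₜ (star c * c)) • τ := fun c =>
    LinearMap.eq_apply_one_smul_of_unique_tracial_state τ hτ1 hτpos hτtrace hτunique _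
      (fun a => hω'pos a c)
      (fun a₁ a₂ => by simpa using hcomm a₁ a₂ (star c * c))
  refine ⟨fun a b => ?_, by rw [← Algebra.TensorProduct.one_def, hω'1],
    fun b => by simpa using hω'pos 1 b⟩
  have hfactor : ω'.comp (TensorProduct.mk ℂ A Z a) = τ a • ω'.comp (TensorProduct.mk ℂ A Z 1) :=
    LinearMap.ext_star_mul_self fun c => by
      simpa [mul_comm] using LinearMap.congr_fun (hslice c) a
  exact LinearMap.congr_fun hfactor b

/-- If `A` has a unique tracial state `τ` and `ω'` is a state on `A ⊗ Z`
commuting with the θ'-fixed subalgebra `A ⊗ 1` (i.e. `ω'((a₁⊗1)(a₂⊗b)) = ω'((a₂⊗b)(a₁⊗1))`),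
then `ω'(a ⊗ b) = τ(a)·ω(b)` where `ω(b) := ω'(1 ⊗ b)` defines a state on `Z`.
(Positivity of states is expressed on elementary tensors, since
`star(a⊗b)·(a⊗b) = (a*a) ⊗ (b*b)`.) -/
theorem stmt_15 {A Z : Type*}
    [NormedRing A] [StarRing A] [CStarRing A] [NormedAlgebra ℂ A] [StarModule ℂ A]
    [CompleteSpace A]
    [NormedRing Z] [StarRing Z] [CStarRing Z] [NormedAlgebra ℂ Z] [StarModule ℂ Z]
    [CompleteSpace Z]
    (τ : A →ₗ[ℂ] ℂ) (hτ1 : τ 1 = 1)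
    (hτpos : ∀ a : A, 0 ≤ (τ (star a * a)).re ∧ (τ (star a * a)).im = 0)
    (hτtrace : ∀ a b : A, τ (a * b) = τ (b * a))
    (hτunique : ∀ ρ : A →ₗ[ℂ] ℂ, ρ 1 = 1 →
      (∀ a : A, 0 ≤ (ρ (star a * a)).re ∧ (ρ (star a * a)).im = 0) →
      (∀ a b : A, ρ (a * b) = ρ (b * a)) → ρ = τ)
    (ω' : A ⊗[ℂ] Z →ₗ[ℂ] ℂ) (hω'1 : ω' 1 = 1)
    (hω'pos : ∀ (a : A) (b : Z),
      0 ≤ (ω' ((star a * a) ⊗ₜ[ℂ] (star b * b))).re ∧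
        (ω' ((star a * a) ⊗ₜ[ℂ] (star b * b))).im = 0)
    (hcomm : ∀ (a₁ a₂ : A) (b : Z),
      ω' ((a₁ ⊗ₜ[ℂ] (1 : Z)) * (a₂ ⊗ₜ[ℂ] b)) =
        ω' ((a₂ ⊗ₜ[ℂ] b) * (a₁ ⊗ₜ[ℂ] (1 : Z)))) :
    (∀ (a : A) (b : Z), ω' (a ⊗ₜ[ℂ] b) = τ a * ω' ((1 : A) ⊗ₜ[ℂ] b)) ∧
      ω' ((1 : A) ⊗ₜ[ℂ] (1 : Z)) = 1 ∧
      (∀ b : Z, 0 ≤ (ω' ((1 : A) ⊗ₜ[ℂ] (star b * b))).re ∧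
        (ω' ((1 : A) ⊗ₜ[ℂ] (star b * b))).im = 0) :=
  stmt_15_general τ hτ1 hτpos hτtrace hτunique ω' hω'1 hω'pos hcomm
end

section
/- Let G be a group of continuous functions on a locally compact space S with positive cone of strictly positive functions (plus 0), containing for each n,m ∈ ℤ the functions h_{n,±}(x) = 1_∓(π(x))·e^{nπ(x)} and closed under the automorphism α(g) = e^{−π}·g. Suppose J is a nonzero order ideal of G with α(J) = J, and suppose there is g ∈ J ∩ G⁺ \ {0} and n,m,K ∈ ℕ such that 0 < 1₋∘π·e^{nπ} + 1₊∘π·e^{−mπ} < K·g pointwise. If additionally for every g' ∈ G⁺ there exist l₁,l₂ ∈ ℤ and M ∈ ℕ with g'(x) < M(α^{l₁}(g₀)(x) + α^{l₂}(g₀)(x)) for all x, where g₀ = 1₋∘π·e^{nπ} + 1₊∘π·e^{−mπ}, then J = G. -/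
/-!
Since `g₀ < K·g`, the ideal property puts `g₀` in `J`, and `α`-invariance then puts every
`α^l(g₀)` in `J`. Every strictly positive element of `G` lies below some
`M·(α^{l₁}(g₀) + α^{l₂}(g₀)) ∈ J`, so it lies in `J` too, and these elements span `G`.
-/

section

variable {S : Type*} [TopologicalSpace S]

/-- `expTwist π t g = e^{-tπ}·g`; thus `expTwist π 1` is the automorphism `α` and
`expTwist π l = α^l` for `l : ℤ`. -/
noncomputable def expTwist (π : C(S, ℝ)) (t : ℝ) (g : C(S, ℝ)) : C(S, ℝ) :=
  ⟨fun x => Real.exp (-(t * π x)) * g x, by fun_prop⟩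

variable (π : C(S, ℝ))

@[simp]
lemma expTwist_apply (t : ℝ) (g : C(S, ℝ)) (x : S) :
    expTwist π t g x = Real.exp (-(t * π x)) * g x :=
  rfl

@[simp]
lemma expTwist_zero (g : C(S, ℝ)) : expTwist π 0 g = g := by
  ext x
  simp

lemma expTwist_expTwist (s t : ℝ) (g : C(S, ℝ)) :
    expTwist π s (expTwist π t g) = expTwist π (s + t) g := by
  ext x
  simp only [expTwist_apply, ← mul_assoc, ← Real.exp_add]
  ring_nf

lemma expTwist_intCast_mem {J : Set C(S, ℝ)} (hJ : ∀ g, g ∈ J ↔ expTwist π 1 g ∈ J)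
    {g : C(S, ℝ)} (hg : g ∈ J) (l : ℤ) : expTwist π l g ∈ J := by
  induction l using Int.induction_on with
  | zero => simpa using hg
  | succ k ih =>
    have h := (hJ _).1 ih
    rw [expTwist_expTwist, add_comm] at h
    exact_mod_cast h
  | pred k ih =>
    rw [hJ, expTwist_expTwist]
    convert ih using 2
    push_cast
    ring

lemma mem_of_lt_nsmul {J : AddSubgroup C(S, ℝ)}
    (hJ : ∀ f g : C(S, ℝ), f ∈ J → ((g = 0) ∨ ∀ x, 0 < g x) →
      ((f - g = 0) ∨ ∀ x, 0 < (f - g) x) → g ∈ J)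
    {f a : C(S, ℝ)} (hf : f ∈ J) (N : ℕ) (ha : ∀ x, 0 < a x) (haf : ∀ x, a x < N * f x) :
    a ∈ J :=
  hJ (N • f) a (J.nsmul_mem hf N) (Or.inr ha)
    (Or.inr fun x => by simpa [nsmul_eq_mul] using haf x)

end

theorem stmt_17_general {S : Type*} [TopologicalSpace S]
    (π : C(S, ℝ))
    (G J : AddSubgroup C(S, ℝ))
    (hGdecomp : ∀ f ∈ G, ∃ a ∈ G, ∃ b ∈ G,
      (∀ x, 0 < a x) ∧ (∀ x, 0 < b x) ∧ f = a - b)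
    (hJhered : ∀ f g : C(S, ℝ), f ∈ J → ((g = 0) ∨ ∀ x, 0 < g x) →
      ((f - g = 0) ∨ ∀ x, 0 < (f - g) x) → g ∈ J)
    (hαJ : ∀ g g' : C(S, ℝ),
      (∀ x, g' x = Real.exp (-(π x)) * g x) → (g ∈ J ↔ g' ∈ J))
    (g : C(S, ℝ)) (hgJ : g ∈ J)
    (K : ℕ) (g₀ : C(S, ℝ))
    (hg₀dom : ∀ x, 0 < g₀ x ∧ g₀ x < K * g x)
    (hdom : ∀ g' ∈ G, (∀ x, 0 < g' x) →
      ∃ (l₁ l₂ : ℤ) (M : ℕ), ∀ x, g' x <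
        M * (Real.exp (-(l₁ * π x)) * g₀ x + Real.exp (-(l₂ * π x)) * g₀ x)) :
    ∀ f ∈ G, f ∈ J := by
  have hα : ∀ g, g ∈ J ↔ expTwist π 1 g ∈ J := fun g => hαJ g _ fun x => by simp
  have hg₀J : g₀ ∈ J :=
    mem_of_lt_nsmul hJhered hgJ K (fun x => (hg₀dom x).1) fun x => (hg₀dom x).2
  have hposJ : ∀ a ∈ G, (∀ x, 0 < a x) → a ∈ J := by
    intro a haG ha
    obtain ⟨l₁, l₂, M, hM⟩ := hdom a haG ha
    have hsum := J.add_mem (expTwist_intCast_mem π hα hg₀J l₁)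
      (expTwist_intCast_mem π hα hg₀J l₂)
    exact mem_of_lt_nsmul hJhered hsum M ha fun x => by simpa using hM x
  intro f hf
  obtain ⟨a, haG, b, hbG, ha, hb, rfl⟩ := hGdecomp f hf
  exact J.sub_mem (hposJ a haG ha) (hposJ b hbG hb)

/-- If `J` is a nonzero `α`-invariant order ideal of `G` (a group of
continuous functions with the strict pointwise cone, `α(g) = e^{−π}·g`) containing a
strictly positive `g` dominating `g₀ = 1₋∘π·e^{nπ} + 1₊∘π·e^{−mπ}` in the sense
`0 < g₀ < K·g`, and every strictly positive element of `G` is dominated by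
`M(α^{l₁}(g₀) + α^{l₂}(g₀))` for suitable `l₁, l₂, M`, then `J = G`. -/
theorem stmt_17 {S : Type*} [TopologicalSpace S] [LocallyCompactSpace S]
    (π : C(S, ℝ)) (h0 : ∀ x, π x ≠ 0)
    (G J : AddSubgroup C(S, ℝ)) (hJG : J ≤ G)
    (hGdecomp : ∀ f ∈ G, ∃ a ∈ G, ∃ b ∈ G,
      (∀ x, 0 < a x) ∧ (∀ x, 0 < b x) ∧ f = a - b)
    (hJdecomp : ∀ f ∈ J, ∃ a ∈ J, ∃ b ∈ J,
      ((a = 0) ∨ ∀ x, 0 < a x) ∧ ((b = 0) ∨ ∀ x, 0 < b x) ∧ f = a - b)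
    (hJhered : ∀ f g : C(S, ℝ), f ∈ J → ((g = 0) ∨ ∀ x, 0 < g x) →
      ((f - g = 0) ∨ ∀ x, 0 < (f - g) x) → g ∈ J)
    (hαJ : ∀ g g' : C(S, ℝ),
      (∀ x, g' x = Real.exp (-(π x)) * g x) → (g ∈ J ↔ g' ∈ J))
    (g : C(S, ℝ)) (hgJ : g ∈ J) (hgpos : ∀ x, 0 < g x)
    (n m : ℤ) (K : ℕ) (g₀ : C(S, ℝ)) (hg₀G : g₀ ∈ G)
    (hg₀def : ∀ x, g₀ x =
      (if π x ≤ 0 then Real.exp (n * π x) else 0) +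
        (if 0 ≤ π x then Real.exp (-(m * π x)) else 0))
    (hg₀dom : ∀ x, 0 < g₀ x ∧ g₀ x < K * g x)
    (hdom : ∀ g' ∈ G, (∀ x, 0 < g' x) →
      ∃ (l₁ l₂ : ℤ) (M : ℕ), ∀ x, g' x <
        M * (Real.exp (-(l₁ * π x)) * g₀ x + Real.exp (-(l₂ * π x)) * g₀ x)) :
    ∀ f ∈ G, f ∈ J :=
  stmt_17_general π G J hGdecomp hJhered hαJ g hgJ K g₀ hg₀dom hdom
end
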